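/- Let κ be an infinite cardinal and γ an infinite cardinal. The (ω,κ,γ)-hat game is winning if and only if κ does not have the γ-MInA. -/

import Mathlib

open Cardinal Set

universe u v

/-- `f` depends on only finitely many coordinates of its argument; this is exactly continuity
with respect to the product topology on `ι → C`, where `C` and `X` carry the discrete topology. -/
def FinDep {ι : Type v} {C : Type u} {X : Type*} (f : (ι → C) → X) : Prop :=
  ∀ h : ι → C, ∃ F : Finset ι, ∀ h' : ι → C, (∀ i ∈ F, h' i = h i) → f h' = f h

/-- A strategy in the hat game with logicians `L`, colours `C` and `< γ` many guesses:
each logician `a : L` produces a set of fewer than `γ` colours as guesses, where the guess is a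
continuous function of the hats of the other logicians (in particular it depends on only finitely
many of the other hats, and never on the logician's own hat). -/
structure HatStrategy (L : Type v) (C : Type u) (γ : Cardinal.{u}) where
  guess : L → (L → C) → Set C
  small : ∀ a h, #(guess a h) < γ
  continuous : ∀ a, FinDep (guess a)
  blind : ∀ a : L, ∀ h h' : L → C, (∀ b, b ≠ a → h b = h' b) → guess a h = guess a h'

/-- A strategy is winning if against every colouring some logician guesses their own colour. -/
def HatStrategy.IsWinning {L : Type v} {C : Type u} {γ : Cardinal.{u}}
    (S : HatStrategy L C γ) : Prop :=
  ∀ h : L → C, ∃ a, h a ∈ S.guess a h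

/-- The hat game with logicians `L`, colours `C` and `< γ` many guesses is winning for the
logicians. -/
def HatWinning (L : Type v) (C : Type u) (γ : Cardinal.{u}) : Prop :=
  ∃ S : HatStrategy L C γ, S.IsWinning

/-- The `(λ, κ, γ)`-hat game is winning: `λ`-many logicians, `κ`-many colours,
`< γ` many guesses. -/
def HatGameWinning (lam κ γ : Cardinal.{u}) : Prop :=
  HatWinning lam.out κ.out γ

/-- The canonical type of `κ`-many colours: the ordinals below `κ.ord`,
equipped with their natural linear order. -/
abbrev HatColour (κ : Cardinal.{u}) : Type u := κ.ord.ToType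

/-- `A` is mutually `F`-independent: no `α ∈ A` lies in a value of a function of the countable
family `F` applied to arguments from `A \\ {α}`. -/
def MutuallyIndep {O : Type u} (F : ℕ → Σ n : ℕ, (Fin n → O) → Set O) (A : Set O) : Prop :=
  ∀ α ∈ A, ∀ i : ℕ, ∀ x : Fin (F i).1 → O, (∀ j, x j ∈ A \ {α}) → α ∉ (F i).2 x

/-- `κ` has the `γ`-MInA: for every countable family of finitary functions
`f : κ^n → [κ]^{<γ}` there is a countably infinite mutually independent subset of `κ`. -/
def MInA (κ γ : Cardinal.{u}) : Prop :=
  ∀ F : ℕ → Σ n : ℕ, (Fin n → HatColour κ) → Set (HatColour κ),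
    (∀ i x, #((F i).2 x) < γ) →
    ∃ A : Set (HatColour κ), A.Countable ∧ A.Infinite ∧ MutuallyIndep F A

/-- `κ` is strongly MInA: it has the `γ`-MInA for every infinite cardinal `γ < κ`. -/
def StronglyMInA (κ : Cardinal.{u}) : Prop :=
  ∀ γ : Cardinal.{u}, ℵ₀ ≤ γ → γ < κ → MInA κ γ

/-!
If the logicians win, their guesses, indexed by logician and number of arguments, form a countable
family of finitary functions. Colour the hats along an enumeration of a countably infinite
independent set: some logician guesses right, and by continuity and blindness that guess is a
value of one of these functions at finitely many other elements of the set, so the set is not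
independent after all.

Conversely, let `F` have no countably infinite independent set. Then every colouring `h` of
infinitely many positions has a *dependent* position `t`: its colour is the colour of another
position, or a value of some `F i` at the colours of other positions (if `h` is injective, its
image is not independent). Logician `n` waits for the first stage at which the hats other than
their own show a dependency, and guesses every colour explained at that stage. If `r` is the first
stage at which all the hats show a dependency, at position `t`, then logician `t` waits at least
until stage `r` and so guesses `h t`.
-/

lemma mk_iUnion_lt_of_finite {α : Type u} {ι : Type v} [Finite ι] {γ : Cardinal.{u}}
    (hγ : ℵ₀ ≤ γ) {s : ι → Set α} (hs : ∀ i, #(s i) < γ) : #(⋃ i, s i) < γ := by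
  classical
  have := Fintype.ofFinite ι
  have key : ∀ t : Finset ι, #(⋃ i ∈ t, s i) < γ := by
    intro t
    induction t using Finset.induction_on with
    | empty => simpa using aleph0_pos.trans_le hγ
    | insert a t _ ih =>
      rw [Finset.set_biUnion_insert]
      exact (mk_union_le _ _).trans_lt (add_lt_of_lt hγ (hs a) ih)
  simpa using key Finset.univ

section

variable {L : Type v} {C D : Type u} {γ : Cardinal.{u}}

def HatStrategy.mapEquiv (S : HatStrategy L C γ) (e : C ≃ D) : HatStrategy L D γ where
  guess a h := e '' S.guess a (e.symm ∘ h)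
  small a h := by rw [mk_image_eq e.injective]; exact S.small _ _
  continuous a h := by
    obtain ⟨s, hs⟩ := S.continuous a (e.symm ∘ h)
    exact ⟨s, fun h' hh' => congrArg (e '' ·) (hs _ fun i hi => congrArg e.symm (hh' i hi))⟩
  blind a h h' hhh' := congrArg (e '' ·) (S.blind a _ _ fun b hb => congrArg e.symm (hhh' b hb))

lemma HatWinning.of_equiv (e : C ≃ D) : HatWinning L C γ → HatWinning L D γ := by
  rintro ⟨S, hS⟩
  refine ⟨S.mapEquiv e, fun h => ?_⟩
  obtain ⟨a, ha⟩ := hS (e.symm ∘ h)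
  exact ⟨a, e.symm (h a), ha, e.apply_symm_apply _⟩

lemma hatWinning_congr (e : C ≃ D) : HatWinning L C γ ↔ HatWinning L D γ :=
  ⟨.of_equiv e, .of_equiv e.symm⟩

lemma HatStrategy.exists_finset_guess_eq (S : HatStrategy L C γ) (a : L) (h : L → C) :
    ∃ s : Finset L, ∀ h', (∀ b ∈ s, b ≠ a → h' b = h b) → S.guess a h' = S.guess a h := by
  classical
  obtain ⟨s, hs⟩ := S.continuous a h
  refine ⟨s, fun h' hh' => ?_⟩
  rw [S.blind a h' (Function.update h' a (h a)) fun b hb => (Function.update_of_ne hb _ _).symm]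
  refine hs _ fun b hb => ?_
  by_cases hba : b = a
  · rw [hba, Function.update_self]
  · rw [Function.update_of_ne hba, hh' b hb hba]

end

namespace HatGame

variable {C : Type u}

/-- `MInA κ γ` is `HasMInA (HatColour κ) γ` by definition. -/
def HasMInA (C : Type u) (γ : Cardinal.{u}) : Prop :=
  ∀ F : ℕ → Σ n : ℕ, (Fin n → C) → Set C,
    (∀ i x, #((F i).2 x) < γ) →
    ∃ A : Set C, A.Countable ∧ A.Infinite ∧ MutuallyIndep F A

section Reach

variable (F : ℕ → Σ n : ℕ, (Fin n → C) → Set C) (h : ℕ → C)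

/-- The colours explained at stage `M` by the hats at the positions `s ∩ [0, M)`: their own
colours, and the values on them of the functions `F i` with `i < M`. -/
def reach (M : ℕ) (s : Set ℕ) : Set C :=
  h '' (s ∩ Iio M) ∪
    {c | ∃ i < M, ∃ p : Fin (F i).1 → ℕ, (∀ j, p j ∈ s ∩ Iio M) ∧ c ∈ (F i).2 fun j => h (p j)}

def Dependent (M : ℕ) (s : Set ℕ) : Prop :=
  ∃ t ∈ s, t < M ∧ h t ∈ reach F h M (s \ {t})

variable {F h}

lemma reach_mono {M M' : ℕ} {s s' : Set ℕ} (hM : M ≤ M') (hs : s ⊆ s') :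
    reach F h M s ⊆ reach F h M' s' := by
  have hsub : s ∩ Iio M ⊆ s' ∩ Iio M' := inter_subset_inter hs (Iio_subset_Iio hM)
  rintro c (hc | ⟨i, hi, p, hp, hc⟩)
  · exact Or.inl (image_mono hsub hc)
  · exact Or.inr ⟨i, hi.trans_le hM, p, fun j => hsub (hp j), hc⟩

lemma Dependent.mono {M : ℕ} {s s' : Set ℕ} (hs : s ⊆ s') (hdep : Dependent F h M s) :
    Dependent F h M s' :=
  let ⟨t, hts, htM, ht⟩ := hdep
  ⟨t, hs hts, htM, reach_mono le_rfl (sdiff_subset_sdiff_left hs) ht⟩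

lemma reach_congr {h' : ℕ → C} {M : ℕ} {s : Set ℕ} (hh' : EqOn h h' (s ∩ Iio M)) :
    reach F h M s = reach F h' M s := by
  refine congrArg₂ (· ∪ ·) hh'.image_eq (Set.ext fun c => ?_)
  refine exists_congr fun i => and_congr_right fun _ => exists_congr fun p =>
    and_congr_right fun hp => ?_
  rw [show (fun j => h (p j)) = fun j => h' (p j) from funext fun j => hh' (hp j)]

lemma dependent_congr {h' : ℕ → C} {M : ℕ} {s : Set ℕ} (hh' : EqOn h h' (s ∩ Iio M)) :
    Dependent F h M s ↔ Dependent F h' M s := by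
  refine exists_congr fun t => and_congr_right fun hts => and_congr_right fun htM => ?_
  rw [hh' ⟨hts, htM⟩, reach_congr (hh'.mono (inter_subset_inter_left _ sdiff_subset))]

lemma mk_reach_lt {γ : Cardinal.{u}} (hγ : ℵ₀ ≤ γ) (hsmall : ∀ i x, #((F i).2 x) < γ)
    (M : ℕ) (s : Set ℕ) : #(reach F h M s) < γ := by
  have hfin : (s ∩ Iio M).Finite := (finite_Iio M).inter_of_right s
  have := hfin.to_subtype
  have hsub : reach F h M s ⊆ h '' (s ∩ Iio M) ∪
      ⋃ i : Fin M, ⋃ p : Fin (F i).1 → ↥(s ∩ Iio M), (F i).2 fun j => h (p j) := by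
    rintro c (hc | ⟨i, hi, p, hp, hc⟩)
    · exact Or.inl hc
    · exact Or.inr (mem_iUnion₂.2 ⟨⟨i, hi⟩, fun j => ⟨p j, hp j⟩, hc⟩)
  refine (mk_le_mk_of_subset hsub).trans_lt
    ((mk_union_le _ _).trans_lt (add_lt_of_lt hγ ?_ ?_))
  · exact (hfin.image h).lt_aleph0.trans_le hγ
  · exact mk_iUnion_lt_of_finite hγ fun i => mk_iUnion_lt_of_finite hγ fun p => hsmall _ _

variable (h)

/-- The dependency is a repetition, or else comes from the failure of independence of the
infinite image `h '' s`. -/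
lemma exists_dependent (hF : ∀ A : Set C, A.Countable → A.Infinite → ¬ MutuallyIndep F A)
    {s : Set ℕ} (hs : s.Infinite) : ∃ M, Dependent F h M s := by
  by_cases hinj : InjOn h s
  · have hdep := hF _ (s.to_countable.image h) (hs.image hinj)
    simp only [MutuallyIndep, not_forall, not_not] at hdep
    obtain ⟨_, ⟨t, hts, rfl⟩, i, x, hx, hti⟩ := hdep
    choose m hms hmx using fun j => (hx j).1
    have hmt : ∀ j, m j ≠ t := fun j hj => (hx j).2 (by rw [← hmx j, hj]; rfl)
    obtain ⟨B, hB⟩ := (finite_range m).bddAbove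
    refine ⟨i + t + B + 1, t, hts, by omega,
      Or.inr ⟨i, by omega, m, fun j => ⟨⟨hms j, hmt j⟩, ?_⟩, ?_⟩⟩
    · have := hB (mem_range_self j)
      simp only [mem_Iio]
      omega
    · rwa [show (fun j => h (m j)) = x from funext hmx]
  · simp only [InjOn, not_forall] at hinj
    obtain ⟨a, ha, b, hb, hab, hne⟩ := hinj
    refine ⟨a + b + 1, a, ha, by omega, Or.inl ⟨b, ⟨⟨hb, Ne.symm hne⟩, ?_⟩, hab.symm⟩⟩
    simp only [mem_Iio]
    omega

end Reach

section Strategy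

variable {F : ℕ → Σ n : ℕ, (Fin n → C) → Set C}
  (hF : ∀ A : Set C, A.Countable → A.Infinite → ¬ MutuallyIndep F A)

open Classical in
noncomputable def stage (n : ℕ) (h : ℕ → C) : ℕ :=
  Nat.find (exists_dependent h hF (finite_singleton n).infinite_compl)

lemma dependent_stage (n : ℕ) (h : ℕ → C) : Dependent F h (stage hF n h) {n}ᶜ := by
  classical
  exact Nat.find_spec (exists_dependent h hF (finite_singleton n).infinite_compl)

lemma stage_congr {n : ℕ} {h h' : ℕ → C} (hh' : EqOn h h' ({n}ᶜ ∩ Iio (stage hF n h))) :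
    stage hF n h = stage hF n h' := by
  classical
  exact Nat.find_congr (dependent_stage hF n h) fun _ hM =>
    dependent_congr (hh'.mono (inter_subset_inter_right _ (Iio_subset_Iio hM)))

noncomputable def guess (n : ℕ) (h : ℕ → C) : Set C :=
  reach F h (stage hF n h) {n}ᶜ

lemma guess_congr {n : ℕ} {h h' : ℕ → C} (hh' : EqOn h h' ({n}ᶜ ∩ Iio (stage hF n h))) :
    guess hF n h = guess hF n h' := by
  rw [guess, guess, ← stage_congr hF hh', reach_congr hh']

/-- A logician whose hat is explained by the earliest dependency among all the hats has not
stopped before that dependency's stage. -/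
lemma exists_mem_guess (h : ℕ → C) : ∃ n, h n ∈ guess hF n h := by
  classical
  have hr := exists_dependent h hF infinite_univ
  obtain ⟨t, -, -, ht⟩ := Nat.find_spec hr
  have hle : Nat.find hr ≤ stage hF t h :=
    Nat.find_min' hr ((dependent_stage hF t h).mono (subset_univ _))
  exact ⟨t, reach_mono hle (fun _ hj => hj.2) ht⟩

noncomputable def strategy {γ : Cardinal.{u}} (hγ : ℵ₀ ≤ γ) (hsmall : ∀ i x, #((F i).2 x) < γ) :
    HatStrategy ℕ C γ where
  guess := guess hF
  small _ _ := mk_reach_lt hγ hsmall _ _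
  continuous n h := ⟨Finset.range (stage hF n h), fun _ hh' =>
    (guess_congr hF fun j hj => (hh' j (Finset.mem_range.2 hj.2)).symm).symm⟩
  blind _ _ _ hhh' := guess_congr hF fun j hj => hhh' j hj.1

end Strategy

lemma hatWinning_of_not_hasMInA {γ : Cardinal.{u}} (hγ : ℵ₀ ≤ γ) (hM : ¬ HasMInA C γ) :
    HatWinning ℕ C γ := by
  obtain ⟨F, hsmall, hF⟩ : ∃ F : ℕ → Σ n : ℕ, (Fin n → C) → Set C, (∀ i x, #((F i).2 x) < γ) ∧
      ∀ A : Set C, A.Countable → A.Infinite → ¬ MutuallyIndep F A := by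
    simpa [HasMInA] using hM
  exact ⟨strategy hF hγ hsmall, exists_mem_guess hF⟩

/-- The `k`-th function applies the guess of logician `k.unpair.1` to its `k + 1` arguments,
repeated cyclically; so each logician comes with arbitrarily many arguments. -/
def guessFamily {γ : Cardinal.{u}} (S : HatStrategy ℕ C γ) (k : ℕ) :
    Σ n : ℕ, (Fin n → C) → Set C :=
  ⟨k + 1, fun x => S.guess k.unpair.1 fun i => x (Fin.ofNat (k + 1) i)⟩

lemma not_hasMInA_of_hatWinning {γ : Cardinal.{u}} (hW : HatWinning ℕ C γ) : ¬ HasMInA C γ := by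
  intro hM
  obtain ⟨S, hS⟩ := hW
  obtain ⟨A, -, hA, hind⟩ := hM (guessFamily S) fun _ _ => S.small _ _
  let a := hA.natEmbedding _
  let h : ℕ → C := fun i => a i
  have h_inj : h.Injective := Subtype.val_injective.comp a.injective
  obtain ⟨n, hn⟩ := hS h
  obtain ⟨s, hs⟩ := S.exists_finset_guess_eq n h
  obtain ⟨m, hm⟩ := s.exists_le
  let k := Nat.pair n m
  let x : Fin (k + 1) → C := fun j => h (if (j : ℕ) = n then n + 1 else j)
  refine hind (h n) (a n).2 k x (fun j => ⟨(a _).2, fun hx => ?_⟩) ?_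
  · have := h_inj hx
    split_ifs at this <;> omega
  · show h n ∈ S.guess k.unpair.1 fun i => x (Fin.ofNat (k + 1) i)
    rw [Nat.unpair_pair, hs _ fun b hb hbn => ?_]
    · exact hn
    have hbk : b < k + 1 := Nat.lt_succ_of_le ((hm b hb).trans (Nat.right_le_pair n m))
    simp only [x, Fin.val_ofNat, Nat.mod_eq_of_lt hbk, hbn, if_false]

lemma hatWinning_iff_not_hasMInA {γ : Cardinal.{u}} (hγ : ℵ₀ ≤ γ) :
    HatWinning ℕ C γ ↔ ¬ HasMInA C γ :=
  ⟨not_hasMInA_of_hatWinning, hatWinning_of_not_hasMInA hγ⟩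

end HatGame

theorem stmt9_general (κ γ : Cardinal.{u}) (hγ : ℵ₀ ≤ γ) :
    HatWinning ℕ κ.out γ ↔ ¬ MInA κ γ := by
  obtain ⟨e⟩ : Nonempty (κ.out ≃ HatColour κ) :=
    Cardinal.eq.1 (by rw [mk_out, mk_toType, card_ord])
  exact (hatWinning_congr e).trans (HatGame.hatWinning_iff_not_hasMInA hγ)

/-- For infinite `κ` and `γ`, the `(ω,κ,γ)`-hat game is winning iff `κ` does not have the
`γ`-MInA. -/
theorem stmt9 (κ γ : Cardinal.{u}) (hκ : ℵ₀ ≤ κ) (hγ : ℵ₀ ≤ γ) :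
    HatWinning ℕ κ.out γ ↔ ¬ MInA κ γ :=
  stmt9_general κ γ hγ
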